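/- Let X₀ have density p₀ on ℝ^d with compact support, let g : ℝ^d → ℝ be bounded measurable, and let X_t = μ_t X₀ + σ_t ε with ε ∼ N(0, I_d) independent of X₀, with marginal density p_t. Define m(x) := E[g(X₀) | X_t = x] = ∫ g(x₀) φ_d(x; μ_t x₀, σ_t² I_d) p₀(x₀) dx₀ / p_t(x). Then m is differentiable and ∇m(x) = (μ_t/σ_t²) · Cov(X₀, g(X₀) | X_t = x), where the k-th entry of the conditional covariance is E[X_{0,k} g(X₀) | X_t = x] − E[X_{0,k} | X_t = x]·E[g(X₀) | X_t = x]. -/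

import Mathlib

open MeasureTheory Real

/-!
Numerator and denominator of `m` are integrals of a compactly supported integrable weight against
the smooth kernel `(y, x₀) ↦ φ_d(y; μ_t x₀, σ_t² I_d)`, so they can be differentiated under the
integral sign: on a compact neighbourhood of `x` times the support of the weight the kernel's
derivative is bounded. Since `∂_k φ_d(y; μ_t x₀, σ_t²) = ((μ_t x₀ₖ - yₖ)/σ_t²) φ_d`, the
quotient rule produces `(μ_t/σ_t²)(E[X₀ₖ g] - E[X₀ₖ] E[g])` after the `yₖ` terms cancel.
-/

/-- The `d`-dimensional Gaussian density `φ_d(x; m, σ² I_d)`. -/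
noncomputable def gaussKernel (d : ℕ) (σ2 : ℝ) (x m : Fin d → ℝ) : ℝ :=
  (2 * Real.pi * σ2) ^ (-(d : ℝ) / 2) *
    Real.exp (-(∑ i, (x i - m i) ^ 2) / (2 * σ2))

open Metric

theorem norm_smul_le_mul_norm_of_bound_on_tsupport {X F : Type*} [TopologicalSpace X]
    [NormedAddCommGroup F] [NormedSpace ℝ F] {w : X → ℝ} {h : X → F} {C : ℝ}
    (hC : ∀ a ∈ tsupport w, ‖h a‖ ≤ C) (a : X) : ‖w a • h a‖ ≤ C * ‖w a‖ := by
  by_cases ha : a ∈ tsupport w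
  · rw [norm_smul, mul_comm]
    exact mul_le_mul_of_nonneg_right (hC a ha) (norm_nonneg _)
  · simp [image_eq_zero_of_notMem_tsupport ha]

theorem MeasureTheory.Integrable.smul_continuous_of_hasCompactSupport {X F : Type*}
    [TopologicalSpace X] [MeasurableSpace X] [OpensMeasurableSpace X] [NormedAddCommGroup F]
    [NormedSpace ℝ F] [SecondCountableTopologyEither X F] {μ : Measure X} {w : X → ℝ}
    (hw : Integrable w μ) (hw_supp : HasCompactSupport w) {h : X → F} (hh : Continuous h) :
    Integrable (fun a => w a • h a) μ := by
  obtain ⟨C, hC⟩ := hw_supp.isCompact.exists_bound_of_continuousOn hh.continuousOn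
  exact (hw.norm.const_mul C).mono' (hw.aestronglyMeasurable.smul hh.aestronglyMeasurable)
    (.of_forall (norm_smul_le_mul_norm_of_bound_on_tsupport hC))

theorem HasFDerivAt.div {𝕜 E : Type*} [NontriviallyNormedField 𝕜] [NormedAddCommGroup E]
    [NormedSpace 𝕜 E] {c d : E → 𝕜} {c' d' : E →L[𝕜] 𝕜} {x : E}
    (hc : HasFDerivAt c c' x) (hd : HasFDerivAt d d' x) (hx : d x ≠ 0) :
    HasFDerivAt (fun y => c y / d y) ((d x)⁻¹ • c' - (c x / d x ^ 2) • d') x := by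
  have h : HasFDerivAt (fun y => c y * (d y)⁻¹) _ x := hc.mul ((hasFDerivAt_inv hx).comp x hd)
  simp_rw [div_eq_mul_inv]
  refine h.congr_fderiv ?_
  ext v
  simp only [add_apply, smul_apply, ContinuousLinearMap.comp_apply,
    ContinuousLinearMap.toSpanSingleton_apply, smul_eq_mul, mul_neg, sub_apply]
  ring

section ParametricIntegral

variable {E X : Type*} [NormedAddCommGroup E] [NormedSpace ℝ E] [NormedAddCommGroup X]
  [NormedSpace ℝ X]

theorem ContDiff.continuous_fderiv_of_uncurry {κ : E → X → ℝ}
    (hκ : ContDiff ℝ 1 (Function.uncurry κ)) :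
    Continuous fun p : E × X => fderiv ℝ (κ · p.2) p.1 :=
  (ContDiff.fderiv (f := fun p : E × X => (κ · p.2))
    (hκ.comp (contDiff_snd.prodMk (contDiff_snd.comp contDiff_fst)))
    (contDiff_fst (n := 0)) (by norm_num)).continuous

theorem hasFDerivAt_integral_mul_of_contDiff [FiniteDimensional ℝ E] [MeasurableSpace X]
    [BorelSpace X] {μ : Measure X} {κ : E → X → ℝ}
    (hκ : ContDiff ℝ 1 (Function.uncurry κ)) {w : X → ℝ} (hw : Integrable w μ)
    (hw_supp : HasCompactSupport w) (y₀ : E) :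
    HasFDerivAt (fun y => ∫ a, w a * κ y a ∂μ) (∫ a, w a • fderiv ℝ (κ · a) y₀ ∂μ) y₀ := by
  have hκ_cont (y : E) : Continuous (κ y) := hκ.continuous.comp (.prodMk_right y)
  have hκ' := hκ.continuous_fderiv_of_uncurry
  obtain ⟨C, hC⟩ := ((isCompact_closedBall y₀ 1).prod hw_supp).exists_bound_of_continuousOn
    hκ'.continuousOn
  refine hasFDerivAt_integral_of_dominated_of_fderiv_le (bound := fun a => C * ‖w a‖)
    (ball_mem_nhds y₀ one_pos)
    (.of_forall fun y => hw.aestronglyMeasurable.mul (hκ_cont y).aestronglyMeasurable)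
    (hw.smul_continuous_of_hasCompactSupport hw_supp (hκ_cont y₀))
    (hw.aestronglyMeasurable.smul (hκ'.comp (.prodMk_right y₀)).aestronglyMeasurable)
    (.of_forall fun a y hy => norm_smul_le_mul_norm_of_bound_on_tsupport
      (fun a ha => hC (y, a) ⟨ball_subset_closedBall hy, ha⟩) a)
    (hw.norm.const_mul C) (.of_forall fun a y _ => ?_)
  exact ((hκ.differentiable one_ne_zero).comp (differentiable_id.prodMk
    (differentiable_const a)) y).hasFDerivAt.const_mul (w a)

end ParametricIntegral

section GaussKernel

variable {d : ℕ} {σ2 : ℝ}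

theorem gaussKernel_pos (hσ2 : 0 < σ2) (x m : Fin d → ℝ) : 0 < gaussKernel d σ2 x m := by
  unfold gaussKernel
  positivity

theorem contDiff_gaussKernel : ContDiff ℝ ⊤ (Function.uncurry (gaussKernel d σ2)) := by
  unfold Function.uncurry gaussKernel
  fun_prop

theorem fderiv_gaussKernel_apply_single (x m : Fin d → ℝ) (k : Fin d) :
    fderiv ℝ (gaussKernel d σ2 · m) x (Pi.single k 1)
      = -((x k - m k) / σ2) * gaussKernel d σ2 x m := by
  have hsq (i : Fin d) : fderiv ℝ (fun z : Fin d → ℝ => (z i - m i) ^ 2) x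
      = (2 * (x i - m i)) • ContinuousLinearMap.proj i := by
    simpa using (((hasFDerivAt_apply (𝕜 := ℝ) i x).sub_const (m i)).pow 2).fderiv
  simp only [gaussKernel, div_eq_mul_inv]
  simp (disch := fun_prop) only [fderiv_const_mul, fderiv_exp, fderiv_fun_neg, fderiv_mul_const,
    fderiv_fun_sum, hsq, neg_apply, smul_apply, sum_apply, ContinuousLinearMap.proj_apply,
    Pi.single_apply, smul_eq_mul, mul_ite, mul_one, mul_zero, Finset.sum_ite_eq',
    Finset.mem_univ, if_true]
  ring

end GaussKernel

/-- `∫ w(x₀) φ_d(y; μ x₀, σ² I_d) dx₀`: with `w = p₀` this is the marginal density `p_t(y)`, and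
with `w = h p₀` it is the numerator of `E[h(X₀) | X_t = y]` in Bayes' rule. -/
noncomputable def bayesNumerator (d : ℕ) (μt σ2 : ℝ) (w : (Fin d → ℝ) → ℝ) (y : Fin d → ℝ) : ℝ :=
  ∫ x0, w x0 * gaussKernel d σ2 y (μt • x0)

section BayesNumerator

variable {d : ℕ} {μt σ2 : ℝ} {w : (Fin d → ℝ) → ℝ}

theorem integrable_mul_gaussKernel (hw : Integrable w) (hw_supp : HasCompactSupport w)
    (y : Fin d → ℝ) : Integrable fun x0 => w x0 * gaussKernel d σ2 y (μt • x0) :=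
  hw.smul_continuous_of_hasCompactSupport hw_supp
    (contDiff_gaussKernel.continuous.comp (.prodMk_right y) |>.comp (continuous_const_smul μt))

theorem bayesNumerator_pos (hσ2 : 0 < σ2) (hw : Integrable w) (hw_supp : HasCompactSupport w)
    (hw_nonneg : 0 ≤ w) (hw_pos : 0 < ∫ x0, w x0) (y : Fin d → ℝ) :
    0 < bayesNumerator d μt σ2 w y := by
  rw [integral_pos_iff_support_of_nonneg hw_nonneg hw] at hw_pos
  rw [bayesNumerator, integral_pos_iff_support_of_nonneg
    (fun x0 => mul_nonneg (hw_nonneg x0) (gaussKernel_pos hσ2 _ _).le)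
    (integrable_mul_gaussKernel hw hw_supp y), Function.support_mul,
    Function.support_eq_univ fun x0 => (gaussKernel_pos hσ2 y (μt • x0)).ne', Set.inter_univ]
  exact hw_pos

theorem contDiff_gaussKernel_smul :
    ContDiff ℝ 1 (Function.uncurry fun y x0 => gaussKernel d σ2 y (μt • x0)) :=
  (contDiff_gaussKernel.comp (contDiff_fst.prodMk (contDiff_snd.const_smul μt))).of_le le_top

theorem hasFDerivAt_bayesNumerator (hw : Integrable w) (hw_supp : HasCompactSupport w)
    (y : Fin d → ℝ) :
    HasFDerivAt (bayesNumerator d μt σ2 w)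
      (∫ x0, w x0 • fderiv ℝ (gaussKernel d σ2 · (μt • x0)) y) y :=
  hasFDerivAt_integral_mul_of_contDiff (κ := fun y x0 => gaussKernel d σ2 y (μt • x0))
    contDiff_gaussKernel_smul hw hw_supp y

theorem integral_smul_fderiv_gaussKernel_apply_single (hw : Integrable w)
    (hw_supp : HasCompactSupport w) (y : Fin d → ℝ) (k : Fin d) :
    (∫ x0, w x0 • fderiv ℝ (gaussKernel d σ2 · (μt • x0)) y) (Pi.single k 1)
      = μt / σ2 * bayesNumerator d μt σ2 (fun x0 => x0 k * w x0) y
        - y k / σ2 * bayesNumerator d μt σ2 w y := by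
  have hkw : Integrable fun x0 : Fin d → ℝ => x0 k * w x0 := by
    simpa [mul_comm] using hw.smul_continuous_of_hasCompactSupport hw_supp (continuous_apply k)
  rw [ContinuousLinearMap.integral_apply ?_, bayesNumerator, bayesNumerator,
    ← integral_const_mul, ← integral_const_mul, ← integral_sub]
  · congr 1 with x0
    rw [smul_apply, fderiv_gaussKernel_apply_single, Pi.smul_apply,
      smul_eq_mul, smul_eq_mul]
    ring
  · exact (integrable_mul_gaussKernel hkw (hw_supp.mul_left) y).const_mul _
  · exact (integrable_mul_gaussKernel hw hw_supp y).const_mul _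
  · have hcont := (contDiff_gaussKernel_smul (μt := μt) (σ2 := σ2)).continuous_fderiv_of_uncurry
      |>.comp (Continuous.prodMk_right (X := Fin d → ℝ) y)
    exact hw.smul_continuous_of_hasCompactSupport hw_supp hcont

end BayesNumerator

theorem gradient_posterior_expectation_eq_cov_general
    {d : ℕ} (μt σt : ℝ) (hσt : 0 < σt)
    (p0 : (Fin d → ℝ) → ℝ) (hp0_cont : Continuous p0) (hp0_supp : HasCompactSupport p0)
    (hp0_nonneg : ∀ x, 0 ≤ p0 x) (hp0_int : ∫ x, p0 x = 1)
    (g : (Fin d → ℝ) → ℝ) (hg_meas : Measurable g) (hg_bdd : ∃ C, ∀ x, |g x| ≤ C)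
    (pt m : (Fin d → ℝ) → ℝ)
    (hpt : pt = fun x => ∫ x0, gaussKernel d (σt ^ 2) x (μt • x0) * p0 x0)
    (hm : m = fun x =>
      (∫ x0, g x0 * gaussKernel d (σt ^ 2) x (μt • x0) * p0 x0) / pt x)
    (x : Fin d → ℝ) :
    DifferentiableAt ℝ m x ∧
    ∀ k : Fin d,
      fderiv ℝ m x (Pi.single k 1)
        = (μt / σt ^ 2) *
            ((∫ x0, x0 k * g x0 * gaussKernel d (σt ^ 2) x (μt • x0) * p0 x0) / pt x
              - ((∫ x0, x0 k * gaussKernel d (σt ^ 2) x (μt • x0) * p0 x0) / pt x)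
                * ((∫ x0, g x0 * gaussKernel d (σt ^ 2) x (μt • x0) * p0 x0) / pt x)) := by
  obtain ⟨C, hC⟩ := hg_bdd
  have hp0 : Integrable p0 := hp0_cont.integrable_of_hasCompactSupport hp0_supp
  have hgp0 : Integrable fun x0 => g x0 * p0 x0 :=
    hp0.bdd_mul hg_meas.aestronglyMeasurable (.of_forall hC)
  have hgp0_supp : HasCompactSupport fun x0 => g x0 * p0 x0 := hp0_supp.mul_left
  have hN (h : (Fin d → ℝ) → ℝ) (y : Fin d → ℝ) :
      ∫ x0, h x0 * gaussKernel d (σt ^ 2) y (μt • x0) * p0 x0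
        = bayesNumerator d μt (σt ^ 2) (fun x0 => h x0 * p0 x0) y :=
    integral_congr_ae (.of_forall fun x0 => by ring)
  have hpt_eq : pt = bayesNumerator d μt (σt ^ 2) p0 := by
    rw [hpt]; ext y; exact integral_congr_ae (.of_forall fun x0 => mul_comm _ _)
  have hm_eq : m = fun y => bayesNumerator d μt (σt ^ 2) (fun x0 => g x0 * p0 x0) y
      / bayesNumerator d μt (σt ^ 2) p0 y := by
    rw [hm, hpt_eq]; simp only [hN]
  have hpt_pos : 0 < bayesNumerator d μt (σt ^ 2) p0 x :=
    bayesNumerator_pos (by positivity) hp0 hp0_supp hp0_nonneg (hp0_int ▸ one_pos) x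
  have hm_deriv := (hasFDerivAt_bayesNumerator (μt := μt) (σ2 := σt ^ 2) hgp0 hgp0_supp x).div
    (hasFDerivAt_bayesNumerator hp0 hp0_supp x) hpt_pos.ne'
  rw [← hm_eq] at hm_deriv
  refine ⟨hm_deriv.differentiableAt, fun k => ?_⟩
  simp only [hpt_eq, hN, hm_deriv.fderiv, sub_apply, smul_apply, smul_eq_mul]
  rw [integral_smul_fderiv_gaussKernel_apply_single hgp0 hgp0_supp,
    integral_smul_fderiv_gaussKernel_apply_single hp0 hp0_supp]
  simp only [mul_assoc]
  field_simp
  ring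

/-- Gradient of a posterior expectation: with `X_t = μ_t X₀ + σ_t ε`, `X₀ ∼ p₀`
compactly supported, `g` bounded measurable, and
`m(x) = E[g(X₀) | X_t = x]` given by the Bayes-rule integral, `m` is differentiable
and `∇m(x) = (μ_t/σ_t²)·Cov(X₀, g(X₀) | X_t = x)`, coordinatewise. -/
theorem gradient_posterior_expectation_eq_cov
    {d : ℕ} (μt σt : ℝ) (hμt : 0 < μt) (hσt : 0 < σt)
    (p0 : (Fin d → ℝ) → ℝ) (hp0_cont : Continuous p0) (hp0_supp : HasCompactSupport p0)
    (hp0_nonneg : ∀ x, 0 ≤ p0 x) (hp0_int : ∫ x, p0 x = 1)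
    (g : (Fin d → ℝ) → ℝ) (hg_meas : Measurable g) (hg_bdd : ∃ C, ∀ x, |g x| ≤ C)
    (pt m : (Fin d → ℝ) → ℝ)
    (hpt : pt = fun x => ∫ x0, gaussKernel d (σt ^ 2) x (μt • x0) * p0 x0)
    (hm : m = fun x =>
      (∫ x0, g x0 * gaussKernel d (σt ^ 2) x (μt • x0) * p0 x0) / pt x)
    (x : Fin d → ℝ) :
    DifferentiableAt ℝ m x ∧
    ∀ k : Fin d,
      fderiv ℝ m x (Pi.single k 1)
        = (μt / σt ^ 2) *
            ((∫ x0, x0 k * g x0 * gaussKernel d (σt ^ 2) x (μt • x0) * p0 x0) / pt x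
              - ((∫ x0, x0 k * gaussKernel d (σt ^ 2) x (μt • x0) * p0 x0) / pt x)
                * ((∫ x0, g x0 * gaussKernel d (σt ^ 2) x (μt • x0) * p0 x0) / pt x)) :=
  gradient_posterior_expectation_eq_cov_general μt σt hσt p0 hp0_cont hp0_supp hp0_nonneg hp0_int g
    hg_meas hg_bdd pt m hpt hm x
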